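/- arXiv:1007.0199 — 2 statements merged into one kernel-verified Lean document; each statement's English description precedes it below -/
import Mathlib

section
/- Let α : ℝ≥0 × ℝ≥0 → ℝ≥0 be continuous, nonincreasing in its first argument, and satisfy the semigroup property α(ζ₁, α(ζ₂,p)) = α(ζ₁+ζ₂, p) for all ζ₁,ζ₂,p ≥ 0. Define W(x,p) = ∫₀ˣ α(s,p) ds. Then for all x,p ≥ 0 and all 0 ≤ ζ ≤ x: W(x−ζ, α(ζ,p)) + ζ·α(ζ,p) ≤ W(x,p). Consequently sup_{0 ≤ ζ ≤ x} [W(x−ζ, α(ζ,p)) + ζ·α(ζ,p)] = W(x,p). -/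
/-!
Selling a block of `ζ` shares at once earns `ζ α(ζ,p)`, whereas selling them in infinitesimal
pieces earns `∫₀^ζ α(s,p) ds`, which is larger because `α(·,p)` is nonincreasing. By the
semigroup property, the remaining `x - ζ` shares at the new price `α(ζ,p)` then earn exactly
`∫_ζ^x α(s,p) ds`, so the block trade never beats `W(x,p)`, and `ζ = 0` attains it.
-/

open MeasureTheory Set

theorem AntitoneOn.sub_mul_le_intervalIntegral {f : ℝ → ℝ} {a b : ℝ} (hab : a ≤ b)
    (hf : AntitoneOn f (Icc a b)) : (b - a) * f b ≤ ∫ s in a..b, f s := by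
  have hle := intervalIntegral.integral_mono_on (μ := volume) hab intervalIntegrable_const
    (hf.mono (uIcc_of_le hab).subset).intervalIntegrable fun s hs => hf hs ⟨hab, le_rfl⟩ hs.2
  simpa using hle

section PriceImpact

variable {α : ℝ → ℝ → ℝ} {p : ℝ}

theorem intervalIntegral_price_impact_after_sale
    (hsemi : ∀ ζ₁ ζ₂ p, 0 ≤ ζ₁ → 0 ≤ ζ₂ → 0 ≤ p → α ζ₁ (α ζ₂ p) = α (ζ₁ + ζ₂) p)
    (hp : 0 ≤ p) {ζ x : ℝ} (hζ : 0 ≤ ζ) (hζx : ζ ≤ x) :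
    ∫ s in (0:ℝ)..(x - ζ), α s (α ζ p) = ∫ s in ζ..x, α s p := by
  have hshift : ∫ s in (0:ℝ)..(x - ζ), α s (α ζ p) = ∫ s in (0:ℝ)..(x - ζ), α (s + ζ) p :=
    intervalIntegral.integral_congr fun s hs => by
      rw [uIcc_of_le (sub_nonneg.mpr hζx)] at hs
      exact hsemi s ζ p hs.1 hζ hp
  rw [hshift, intervalIntegral.integral_comp_add_right (fun s => α s p) ζ, zero_add,
    sub_add_cancel]

theorem block_sale_le_intervalIntegral
    (hanti : AntitoneOn (fun s => α s p) (Ici 0))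
    (hsemi : ∀ ζ₁ ζ₂ p, 0 ≤ ζ₁ → 0 ≤ ζ₂ → 0 ≤ p → α ζ₁ (α ζ₂ p) = α (ζ₁ + ζ₂) p)
    (hp : 0 ≤ p) {ζ x : ℝ} (hζ : 0 ≤ ζ) (hζx : ζ ≤ x) :
    (∫ s in (0:ℝ)..(x - ζ), α s (α ζ p)) + ζ * α ζ p ≤ ∫ s in (0:ℝ)..x, α s p := by
  have hblock : ζ * α ζ p ≤ ∫ s in (0:ℝ)..ζ, α s p := by
    simpa using (hanti.mono Icc_subset_Ici_self).sub_mul_le_intervalIntegral hζ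
  have hsplit : (∫ s in (0:ℝ)..ζ, α s p) + ∫ s in ζ..x, α s p = ∫ s in (0:ℝ)..x, α s p :=
    intervalIntegral.integral_add_adjacent_intervals
      (hanti.mono fun s hs => (uIcc_of_le hζ ▸ hs).1).intervalIntegrable
      (hanti.mono fun s hs => hζ.trans (uIcc_of_le hζx ▸ hs).1).intervalIntegrable
  rw [intervalIntegral_price_impact_after_sale hsemi hp hζ hζx]
  linarith

end PriceImpact

theorem intervention_fixed_point_general (α : ℝ → ℝ → ℝ)
    (hmono : ∀ p, 0 ≤ p → ∀ ζ₁ ζ₂, 0 ≤ ζ₁ → ζ₁ ≤ ζ₂ → α ζ₂ p ≤ α ζ₁ p)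
    (hsemi : ∀ ζ₁ ζ₂ p, 0 ≤ ζ₁ → 0 ≤ ζ₂ → 0 ≤ p → α ζ₁ (α ζ₂ p) = α (ζ₁ + ζ₂) p)
    (W : ℝ → ℝ → ℝ) (hW : ∀ x p, W x p = ∫ s in (0:ℝ)..x, α s p)
    (x p : ℝ) (hx : 0 ≤ x) (hp : 0 ≤ p) :
    (∀ ζ, 0 ≤ ζ → ζ ≤ x → W (x - ζ) (α ζ p) + ζ * α ζ p ≤ W x p) ∧
    sSup {v : ℝ | ∃ ζ, 0 ≤ ζ ∧ ζ ≤ x ∧ v = W (x - ζ) (α ζ p) + ζ * α ζ p} = W x p := by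
  have hanti : AntitoneOn (fun s => α s p) (Ici 0) := fun ζ₁ h₁ _ _ h => hmono p hp ζ₁ _ h₁ h
  have hbound : ∀ ζ, 0 ≤ ζ → ζ ≤ x → W (x - ζ) (α ζ p) + ζ * α ζ p ≤ W x p := by
    intro ζ hζ hζx
    simpa only [hW] using block_sale_le_intervalIntegral hanti hsemi hp hζ hζx
  have hattained : W (x - 0) (α 0 p) + 0 * α 0 p = W x p := by
    simp only [hW, zero_mul, add_zero]
    exact intervalIntegral_price_impact_after_sale hsemi hp le_rfl hx
  refine ⟨hbound, IsGreatest.csSup_eq ⟨⟨0, le_rfl, hx, hattained.symm⟩, ?_⟩⟩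
  rintro v ⟨ζ, hζ, hζx, rfl⟩
  exact hbound ζ hζ hζx

/-- With zero transaction cost, `W(x,p) = ∫₀ˣ α(s,p) ds` is a fixed point of the
intervention operator. -/
theorem intervention_fixed_point (α : ℝ → ℝ → ℝ)
    (hcont : Continuous (fun q : ℝ × ℝ => α q.1 q.2))
    (hnonneg : ∀ ζ p, 0 ≤ ζ → 0 ≤ p → 0 ≤ α ζ p)
    (hmono : ∀ p, 0 ≤ p → ∀ ζ₁ ζ₂, 0 ≤ ζ₁ → ζ₁ ≤ ζ₂ → α ζ₂ p ≤ α ζ₁ p)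
    (hsemi : ∀ ζ₁ ζ₂ p, 0 ≤ ζ₁ → 0 ≤ ζ₂ → 0 ≤ p → α ζ₁ (α ζ₂ p) = α (ζ₁ + ζ₂) p)
    (W : ℝ → ℝ → ℝ) (hW : ∀ x p, W x p = ∫ s in (0:ℝ)..x, α s p)
    (x p : ℝ) (hx : 0 ≤ x) (hp : 0 ≤ p) :
    (∀ ζ, 0 ≤ ζ → ζ ≤ x → W (x - ζ) (α ζ p) + ζ * α ζ p ≤ W x p) ∧
    sSup {v : ℝ | ∃ ζ, 0 ≤ ζ ∧ ζ ≤ x ∧ v = W (x - ζ) (α ζ p) + ζ * α ζ p} = W x p :=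
  intervention_fixed_point_general α hmono hsemi W hW x p hx hp
end

section
/- Suppose α : ℝ × ℝ → ℝ is differentiable and satisfies α(ζ₁, α(ζ₂,p)) = α(ζ₁+ζ₂, p) for all ζ₁, ζ₂, p. Define γ(p) = −∂α/∂ζ(0,p). Then for all ζ and p: ∂α/∂ζ(ζ,p) = −γ(p)·∂α/∂p(ζ,p). -/
/-!
Setting `ζ₁ = 0` in the flow property shows that every value `α t s` is a fixed point of
`h = α 0`; in particular `h` is idempotent. A differentiable idempotent `h : ℝ → ℝ` with two
distinct fixed points is the identity: its range is a closed interval of fixed points, and at a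
finite endpoint `b` of it `h` would have a global extremum (so `h' b = 0`) while agreeing with
the identity on one side of `b` (so `h' b = 1`). If `h` has at most one fixed point, `α` is
constant and both sides vanish; if `h = id`, differentiating `α ζ (α t p) = α (ζ + t) p` at
`t = 0` is the claim.
-/

open Set Function

lemma HasDerivAt.eq_one_of_eqOn_Icc {h : ℝ → ℝ} {d x b : ℝ} (hd : HasDerivAt h d b)
    (hxb : x < b) (hfix : EqOn h id (Icc x b)) : d = 1 :=
  (uniqueDiffOn_Icc hxb b (right_mem_Icc.2 hxb.le)).eq_deriv _ hd.hasDerivWithinAt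
    ((hasDerivWithinAt_id b _).congr hfix (hfix (right_mem_Icc.2 hxb.le)))

section Idempotent

variable {h : ℝ → ℝ}

lemma range_eq_fixedPoints_of_idempotent (hidem : ∀ z, h (h z) = h z) :
    range h = fixedPoints h :=
  Subset.antisymm (by rintro _ ⟨z, rfl⟩; exact hidem z) fun z hz => ⟨z, hz⟩

lemma not_bddAbove_range_of_idempotent (hd : Differentiable ℝ h) (hidem : ∀ z, h (h z) = h z)
    {x y : ℝ} (hx : h x = x) (hy : h y = y) (hxy : x < y) : ¬BddAbove (range h) := by
  intro hbdd
  have hrange := range_eq_fixedPoints_of_idempotent hidem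
  set b := sSup (range h)
  have hb : b ∈ range h :=
    (hrange ▸ isClosed_fixedPoints hd.continuous).csSup_mem (range_nonempty h) hbdd
  replace hb : h b = b := (hrange ▸ hb : b ∈ fixedPoints h)
  have hxb : x < b := hxy.trans_le (le_csSup hbdd ⟨y, hy⟩)
  have hfix : EqOn h id (Icc x b) := fun z hz =>
    (hrange ▸ (isPreconnected_range hd.continuous).ordConnected.out ⟨x, hx⟩ ⟨b, hb⟩ hz :
      z ∈ fixedPoints h)
  have hmax : IsLocalMax h b :=
    Filter.Eventually.of_forall fun z => hb.symm ▸ le_csSup hbdd ⟨z, rfl⟩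
  exact zero_ne_one (hmax.deriv_eq_zero ▸ (hd b).hasDerivAt.eq_one_of_eqOn_Icc hxb hfix)

lemma not_bddBelow_range_of_idempotent (hd : Differentiable ℝ h) (hidem : ∀ z, h (h z) = h z)
    {x y : ℝ} (hx : h x = x) (hy : h y = y) (hxy : x < y) : ¬BddBelow (range h) := by
  rintro ⟨m, hm⟩
  refine not_bddAbove_range_of_idempotent (h := fun z => -h (-z)) (by fun_prop)
    (fun z => by simp only [neg_neg, hidem]) (x := -y) (y := -x)
    (by simp only [neg_neg, hy]) (by simp only [neg_neg, hx]) (neg_lt_neg hxy) ⟨-m, ?_⟩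
  rintro _ ⟨z, rfl⟩
  exact neg_le_neg (hm ⟨-z, rfl⟩)

lemma eq_id_of_idempotent_of_ne (hd : Differentiable ℝ h) (hidem : ∀ z, h (h z) = h z)
    {x y : ℝ} (hx : h x = x) (hy : h y = y) (hxy : x ≠ y) : h = id := by
  wlog hlt : x < y generalizing x y
  · exact this hy hx hxy.symm (hxy.lt_or_gt.resolve_left hlt)
  funext z
  obtain ⟨_, ⟨a, rfl⟩, haz⟩ :=
    not_bddBelow_iff.1 (not_bddBelow_range_of_idempotent hd hidem hx hy hlt) z
  obtain ⟨_, ⟨c, rfl⟩, hzc⟩ :=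
    not_bddAbove_iff.1 (not_bddAbove_range_of_idempotent hd hidem hx hy hlt) z
  obtain ⟨w, rfl⟩ :=
    (isPreconnected_range hd.continuous).ordConnected.out ⟨a, rfl⟩ ⟨c, rfl⟩ ⟨haz.le, hzc.le⟩
  exact hidem w

end Idempotent

lemma deriv_flow_eq_of_map_zero {α : ℝ → ℝ → ℝ}
    (hsemi : ∀ ζ₁ ζ₂ p, α ζ₁ (α ζ₂ p) = α (ζ₁ + ζ₂) p)
    {ζ p : ℝ} (hα₀ : α 0 p = p) (hζ : DifferentiableAt ℝ (fun z => α z p) 0)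
    (hp : DifferentiableAt ℝ (α ζ) p) :
    deriv (fun z => α z p) ζ = deriv (α ζ) p * deriv (fun z => α z p) 0 := by
  calc deriv (fun z => α z p) ζ = deriv (fun t => α (ζ + t) p) 0 := by
        rw [deriv_comp_const_add (fun z => α z p), add_zero]
    _ = deriv (fun t => α ζ (α t p)) 0 := by simp only [hsemi]
    _ = deriv (α ζ) p * deriv (fun z => α z p) 0 :=
        (hp.hasDerivAt.comp_of_eq 0 hζ.hasDerivAt hα₀.symm).deriv

/-- The semigroup (flow) property forces `∂α/∂ζ(ζ,p) = -γ(p)·∂α/∂p(ζ,p)`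
where `γ(p) = -∂α/∂ζ(0,p)`. -/
theorem impact_derivative_relation (α : ℝ → ℝ → ℝ)
    (hdiff : Differentiable ℝ (fun q : ℝ × ℝ => α q.1 q.2))
    (hsemi : ∀ ζ₁ ζ₂ p, α ζ₁ (α ζ₂ p) = α (ζ₁ + ζ₂) p)
    (γ : ℝ → ℝ) (hγ : ∀ p, γ p = - deriv (fun ζ => α ζ p) 0)
    (ζ p : ℝ) :
    deriv (fun z => α z p) ζ = - γ p * deriv (fun q => α ζ q) p := by
  have hfix : ∀ t s, α 0 (α t s) = α t s := fun t s => by rw [hsemi, zero_add]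
  by_cases hconst : ∀ t s, α t s = α 0 0
  · simp only [hconst, deriv_const', mul_zero]
  obtain ⟨t, s, hts⟩ : ∃ t s, α t s ≠ α 0 0 := by simpa using hconst
  have hdiff₁ : ∀ w, Differentiable ℝ (fun z => α z w) := fun w =>
    hdiff.comp (differentiable_id.prodMk (differentiable_const w))
  have hdiff₂ : ∀ z, Differentiable ℝ (α z) := fun z =>
    hdiff.comp ((differentiable_const z).prodMk differentiable_id)
  have hid : α 0 = id := eq_id_of_idempotent_of_ne (hdiff₂ 0) (hfix 0) (hfix t s) (hfix 0 0) hts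
  rw [deriv_flow_eq_of_map_zero hsemi (congrFun hid p) (hdiff₁ p 0) (hdiff₂ ζ p), hγ]
  ring
end
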